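/- Hardy-type radial computation at a conical singularity: for $n \ge 3$, $\ell \in \mathbb{R}$, $L \ge \max\{\ell, (\pi/(2\rho))^2\} > 0$, and $\Phi(r) := \sin_L(r)^{1-n/2}$ on $(0, \pi/(2\sqrt{L}))$, the inequality $-\Phi''(r) - \frac{n-1}{\tan_\ell(r)}\Phi'(r) \ge \left(\frac{n-2}{2}\right)^2 \sin_L^{-1-n/2}(r)\cos_L^2(r) - \frac{n-2}{2}L\sin_L^{1-n/2}(r)$ holds, and hence $-\frac{\Delta_{rad}\Phi}{\Phi}(r) \ge \left(\frac{n-2}{2}\right)^2\frac{1}{\tan_L^2(r)} - \frac{n-2}{2}L$, where $\Delta_{rad}\Phi = \Phi'' + \frac{n-1}{\tan_\ell(r)}\Phi'$. -/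

import Mathlib

noncomputable def tanl (s : ℝ) : ℝ → ℝ :=
  if 0 < s then fun r => Real.tan (Real.sqrt s * r) / Real.sqrt s
  else if s = 0 then fun r => r
  else fun r => Real.tanh (Real.sqrt (-s) * r) / Real.sqrt (-s)

noncomputable def sinL (L r : ℝ) : ℝ := Real.sin (Real.sqrt L * r) / Real.sqrt L

noncomputable def cosL (L r : ℝ) : ℝ := Real.cos (Real.sqrt L * r)

lemma aux_tanh_le {x : ℝ} (hx : 0 ≤ x) : Real.tanh x ≤ x := by
  have h : ∀ y : ℝ, HasDerivAt (fun y => y * Real.cosh y - Real.sinh y) (y * Real.sinh y) y := by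
    intro y
    have := ((hasDerivAt_id y).mul (Real.hasDerivAt_cosh y)).sub (Real.hasDerivAt_sinh y)
    refine this.congr_deriv ?_
    simp only [id]
    ring
  have hmono : MonotoneOn (fun y => y * Real.cosh y - Real.sinh y) (Set.Ici 0) := by
    apply monotoneOn_of_deriv_nonneg (convex_Ici 0)
    · exact fun y _ => (h y).continuousAt.continuousWithinAt
    · exact fun y _ => (h y).differentiableAt.differentiableWithinAt
    · intro y hy
      rw [(h y).deriv]
      rw [interior_Ici, Set.mem_Ioi] at hy
      exact mul_nonneg hy.le (Real.sinh_nonneg_iff.2 hy.le)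
  have h0 := hmono Set.self_mem_Ici (Set.mem_Ici.2 hx) hx
  simp only [Real.cosh_zero, Real.sinh_zero, zero_mul, sub_zero, mul_one] at h0
  have hc := Real.cosh_pos x
  rw [Real.tanh_eq_sinh_div_cosh, div_le_iff₀ hc]
  linarith

lemma aux_tan_div_mono {a b : ℝ} (ha : 0 < a) (hab : a ≤ b) (hb : b < Real.pi / 2) :
    Real.tan a / a ≤ Real.tan b / b := by
  have hd : ∀ x ∈ Set.Icc a b, HasDerivAt (fun x => Real.tan x / x)
      ((1 / Real.cos x ^ 2 * x - Real.tan x * 1) / x ^ 2) x := by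
    intro x hx
    have hx0 : 0 < x := lt_of_lt_of_le ha hx.1
    have hxlt : x < Real.pi / 2 := lt_of_le_of_lt hx.2 hb
    have hc : Real.cos x ≠ 0 :=
      ne_of_gt (Real.cos_pos_of_mem_Ioo ⟨by linarith [Real.pi_pos], hxlt⟩)
    exact (Real.hasDerivAt_tan hc).div (hasDerivAt_id x) (ne_of_gt hx0)
  have hmono : MonotoneOn (fun x => Real.tan x / x) (Set.Icc a b) := by
    apply monotoneOn_of_deriv_nonneg (convex_Icc a b)
    · exact fun x hx => (hd x hx).continuousAt.continuousWithinAt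
    · intro x hx
      rw [interior_Icc] at hx
      exact (hd x (Set.mem_Icc_of_Ioo hx)).differentiableAt.differentiableWithinAt
    · intro x hx
      rw [interior_Icc] at hx
      rw [(hd x (Set.mem_Icc_of_Ioo hx)).deriv]
      have hx0 : 0 < x := lt_of_lt_of_le ha hx.1.le
      have hxlt : x < Real.pi / 2 := lt_of_lt_of_le hx.2 hb.le
      have hcpos : 0 < Real.cos x :=
        Real.cos_pos_of_mem_Ioo ⟨by linarith [Real.pi_pos], hxlt⟩
      have hc1 : Real.cos x ≤ 1 := Real.cos_le_one x
      have hs : Real.sin x ≤ x := (Real.sin_lt hx0).le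
      have hsn : 0 ≤ Real.sin x := Real.sin_nonneg_of_nonneg_of_le_pi hx0.le
        (by linarith [Real.pi_pos, hxlt])
      apply div_nonneg _ (sq_nonneg x)
      rw [Real.tan_eq_sin_div_cos, mul_one, sub_nonneg]
      have key : Real.sin x * Real.cos x ≤ x := by nlinarith
      calc Real.sin x / Real.cos x = Real.sin x * Real.cos x / Real.cos x ^ 2 := by
            field_simp
        _ ≤ x / Real.cos x ^ 2 := by gcongr
        _ = 1 / Real.cos x ^ 2 * x := by ring
  exact hmono (Set.mem_Icc.2 ⟨le_refl a, hab⟩) (Set.mem_Icc.2 ⟨hab, le_refl b⟩) hab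

lemma aux_hasDerivAt_sinL {L : ℝ} (hL : 0 < L) (x : ℝ) :
    HasDerivAt (sinL L) (cosL L x) x := by
  have hsl : Real.sqrt L ≠ 0 := ne_of_gt (Real.sqrt_pos.2 hL)
  have h1 : HasDerivAt (fun y : ℝ => Real.sqrt L * y) (Real.sqrt L) x := by
    simpa using (hasDerivAt_id x).const_mul (Real.sqrt L)
  have h2 := (Real.hasDerivAt_sin (Real.sqrt L * x)).comp x h1
  have h3 := h2.div_const (Real.sqrt L)
  have : Real.cos (Real.sqrt L * x) * Real.sqrt L / Real.sqrt L = cosL L x := by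
    field_simp [cosL]
    rfl
  rw [this] at h3
  exact h3

lemma aux_hasDerivAt_cosL {L : ℝ} (hL : 0 < L) (x : ℝ) :
    HasDerivAt (cosL L) (-L * sinL L x) x := by
  have hsl : Real.sqrt L ≠ 0 := ne_of_gt (Real.sqrt_pos.2 hL)
  have h1 : HasDerivAt (fun y : ℝ => Real.sqrt L * y) (Real.sqrt L) x := by
    simpa using (hasDerivAt_id x).const_mul (Real.sqrt L)
  have h2 := (Real.hasDerivAt_cos (Real.sqrt L * x)).comp x h1
  have : -Real.sin (Real.sqrt L * x) * Real.sqrt L = -L * sinL L x := by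
    rw [sinL]
    field_simp
    rw [Real.sq_sqrt hL.le]
    ring
  rw [this] at h2
  exact h2

lemma aux_tanl_L {L : ℝ} (hL : 0 < L) (r : ℝ) :
    tanl L r = Real.tan (Real.sqrt L * r) / Real.sqrt L := by
  simp [tanl, hL]

lemma aux_tanl_le {ℓ L r : ℝ} (hℓL : ℓ ≤ L) (hL0 : 0 < L) (hr0 : 0 < r)
    (hb : Real.sqrt L * r < Real.pi / 2) :
    0 < tanl ℓ r ∧ tanl ℓ r ≤ tanl L r := by
  have hsl : 0 < Real.sqrt L := Real.sqrt_pos.2 hL0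
  have hb0 : 0 < Real.sqrt L * r := mul_pos hsl hr0
  have htanb : Real.sqrt L * r < Real.tan (Real.sqrt L * r) := Real.lt_tan hb0 hb
  have hLr : r ≤ tanl L r := by
    rw [aux_tanl_L hL0, le_div_iff₀ hsl]
    nlinarith
  rcases lt_trichotomy ℓ 0 with hneg | hzero | hpos
  · have hml : 0 < Real.sqrt (-ℓ) := Real.sqrt_pos.2 (by linarith)
    have hval : tanl ℓ r = Real.tanh (Real.sqrt (-ℓ) * r) / Real.sqrt (-ℓ) := by
      simp [tanl, not_lt.2 hneg.le, hneg.ne]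
    constructor
    · rw [hval]
      apply div_pos _ hml
      have := Real.sinh_pos_iff.2 (mul_pos hml hr0)
      rw [Real.tanh_eq_sinh_div_cosh]
      exact div_pos this (Real.cosh_pos _)
    · refine le_trans ?_ hLr
      rw [hval, div_le_iff₀ hml]
      have := aux_tanh_le (mul_pos hml hr0).le
      nlinarith
  · subst hzero
    have hval : tanl 0 r = r := by simp [tanl]
    rw [hval]
    exact ⟨hr0, hLr⟩
  · have hsℓ : 0 < Real.sqrt ℓ := Real.sqrt_pos.2 hpos
    have ha0 : 0 < Real.sqrt ℓ * r := mul_pos hsℓ hr0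
    have hab : Real.sqrt ℓ * r ≤ Real.sqrt L * r :=
      mul_le_mul_of_nonneg_right (Real.sqrt_le_sqrt hℓL) hr0.le
    have hmono := aux_tan_div_mono ha0 hab hb
    have hvalℓ : tanl ℓ r = Real.tan (Real.sqrt ℓ * r) / Real.sqrt ℓ := by
      simp [tanl, hpos]
    have htana : 0 < Real.tan (Real.sqrt ℓ * r) :=
      Real.tan_pos_of_pos_of_lt_pi_div_two ha0 (lt_of_le_of_lt hab hb)
    constructor
    · rw [hvalℓ]; exact div_pos htana hsℓ
    · rw [hvalℓ, aux_tanl_L hL0]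
      have e1 : Real.tan (Real.sqrt ℓ * r) / Real.sqrt ℓ
          = r * (Real.tan (Real.sqrt ℓ * r) / (Real.sqrt ℓ * r)) := by
        field_simp
      have e2 : Real.tan (Real.sqrt L * r) / Real.sqrt L
          = r * (Real.tan (Real.sqrt L * r) / (Real.sqrt L * r)) := by
        field_simp
      rw [e1, e2]
      exact mul_le_mul_of_nonneg_left hmono hr0.le

/-- Hardy-type radial computation at a conical singularity,
for `Φ(r) = sin_L(r)^(1-n/2)` and the radial Laplacian with coefficient
`(n-1)/tan_ℓ`. -/
theorem stmt18 (n : ℕ) (hn : 3 ≤ n) (ℓ ρ L : ℝ) (hρ : 0 < ρ)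
    (hL : L ≥ max ℓ ((Real.pi / (2 * ρ)) ^ 2)) (hL0 : 0 < L)
    (Φ : ℝ → ℝ) (hΦ : ∀ r, Φ r = sinL L r ^ (1 - (n : ℝ) / 2))
    (r : ℝ) (hr : r ∈ Set.Ioo 0 (Real.pi / (2 * Real.sqrt L))) :
    (-(deriv (deriv Φ) r) - (n - 1) / tanl ℓ r * deriv Φ r ≥
        (((n : ℝ) - 2) / 2) ^ 2 * sinL L r ^ (-1 - (n : ℝ) / 2) * cosL L r ^ 2
          - ((n : ℝ) - 2) / 2 * L * sinL L r ^ (1 - (n : ℝ) / 2)) ∧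
      -(deriv (deriv Φ) r + (n - 1) / tanl ℓ r * deriv Φ r) / Φ r ≥
        (((n : ℝ) - 2) / 2) ^ 2 * (1 / tanl L r ^ 2) - ((n : ℝ) - 2) / 2 * L := by
  obtain ⟨hr0, hr1⟩ := hr
  have hsl : 0 < Real.sqrt L := Real.sqrt_pos.2 hL0
  have hbr : Real.sqrt L * r < Real.pi / 2 := by
    have := (lt_div_iff₀ (by positivity : (0:ℝ) < 2 * Real.sqrt L)).1 hr1
    nlinarith
  set p : ℝ := 1 - (n : ℝ) / 2 with hp
  set I : Set ℝ := Set.Ioo 0 (Real.pi / (2 * Real.sqrt L)) with hI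
  have hrI : r ∈ I := ⟨hr0, hr1⟩
  -- positivity on I
  have hpos : ∀ x ∈ I, 0 < sinL L x ∧ 0 < cosL L x := by
    intro x hx
    have hx0 : 0 < x := hx.1
    have hxb : Real.sqrt L * x < Real.pi / 2 := by
      have := (lt_div_iff₀ (by positivity : (0:ℝ) < 2 * Real.sqrt L)).1 hx.2
      nlinarith
    have hm : 0 < Real.sqrt L * x := mul_pos hsl hx0
    constructor
    · exact div_pos (Real.sin_pos_of_pos_of_lt_pi hm
        (by linarith [Real.pi_pos])) hsl
    · exact Real.cos_pos_of_mem_Ioo ⟨by linarith [Real.pi_pos], hxb⟩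
  have hΦfun : Φ = fun y => sinL L y ^ p := funext hΦ
  -- first derivative on I
  have hD1 : ∀ x ∈ I, HasDerivAt Φ (p * sinL L x ^ (p - 1) * cosL L x) x := by
    intro x hx
    have hne : sinL L x ≠ 0 := ne_of_gt (hpos x hx).1
    have := (aux_hasDerivAt_sinL hL0 x).rpow_const (p := p) (Or.inl hne)
    rw [hΦfun]
    convert this using 1
    ring
  have hEq : deriv Φ =ᶠ[nhds r] fun x => p * sinL L x ^ (p - 1) * cosL L x := by
    filter_upwards [isOpen_Ioo.mem_nhds hrI] with x hx using (hD1 x hx).deriv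
  have hd1r : deriv Φ r = p * sinL L r ^ (p - 1) * cosL L r := (hD1 r hrI).deriv
  -- second derivative at r
  have hsr : 0 < sinL L r := (hpos r hrI).1
  have hcr : 0 < cosL L r := (hpos r hrI).2
  have hD2 : HasDerivAt (fun x => p * sinL L x ^ (p - 1) * cosL L x)
      (p * ((cosL L r * (p - 1) * sinL L r ^ (p - 1 - 1)) * cosL L r
        + sinL L r ^ (p - 1) * (-L * sinL L r))) r := by
    have h1 := (aux_hasDerivAt_sinL hL0 r).rpow_const (p := p - 1) (Or.inl (ne_of_gt hsr))
    have h2 := (h1.mul (aux_hasDerivAt_cosL hL0 r)).const_mul p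
    have hfe : (fun x => p * sinL L x ^ (p - 1) * cosL L x)
        = (fun y => p * ((fun y => sinL L y ^ (p - 1)) * cosL L) y) := by
      funext y
      simp only [Pi.mul_apply]
      ring
    rw [hfe]
    exact h2
  have hd2r : deriv (deriv Φ) r
      = p * ((cosL L r * (p - 1) * sinL L r ^ (p - 1 - 1)) * cosL L r
        + sinL L r ^ (p - 1) * (-L * sinL L r)) := by
    rw [hEq.deriv_eq]
    exact hD2.deriv
  -- abbreviations
  set s := sinL L r
  set c := cosL L r
  set A := s ^ (p - 1 - 1) with hA
  have hApos : 0 < A := Real.rpow_pos_of_pos hsr _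
  have e1 : s ^ (p - 1) = A * s := by
    rw [hA, ← Real.rpow_add_one (ne_of_gt hsr) (p - 1 - 1)]
    norm_num
  have e2 : s ^ p = A * s * s := by
    rw [hA, ← Real.rpow_add_one (ne_of_gt hsr) (p - 1 - 1),
      ← Real.rpow_add_one (ne_of_gt hsr) (p - 1 - 1 + 1)]
    norm_num
  have e3 : s ^ (-1 - (n : ℝ) / 2) = A := by
    rw [hA]
    congr 1
    rw [hp]; ring
  -- tan comparison
  have hℓL : ℓ ≤ L := le_trans (le_max_left _ _) hL
  obtain ⟨hTpos, hTle⟩ := aux_tanl_le hℓL hL0 hr0 hbr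
  have htanL : tanl L r = s / c := by
    rw [aux_tanl_L hL0, Real.tan_eq_sin_div_cos]
    simp only [s, c, sinL, cosL]
    field_simp
  have hkey : c ≤ s * (1 / tanl ℓ r) := by
    have h1 : tanl ℓ r ≤ s / c := htanL ▸ hTle
    rw [mul_one_div, le_div_iff₀ hTpos]
    calc c * tanl ℓ r ≤ c * (s / c) := by
          exact mul_le_mul_of_nonneg_left h1 hcr.le
      _ = s := by field_simp
  have hn3 : (3 : ℝ) ≤ (n : ℝ) := by exact_mod_cast hn
  -- first inequality
  have main1 : -(deriv (deriv Φ) r) - ((n : ℝ) - 1) / tanl ℓ r * deriv Φ r ≥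
      (((n : ℝ) - 2) / 2) ^ 2 * A * c ^ 2 - ((n : ℝ) - 2) / 2 * L * (A * s * s) := by
    rw [hd2r, hd1r, e1]
    have hfact : 0 ≤ ((n : ℝ) - 1) * (((n : ℝ) - 2) / 2) * A * c
        * (s * (1 / tanl ℓ r) - c) := by
      have h1 : (0:ℝ) ≤ ((n : ℝ) - 1) * (((n : ℝ) - 2) / 2) * A * c :=
        mul_nonneg (mul_nonneg (mul_nonneg (by linarith : (0:ℝ) ≤ (n : ℝ) - 1)
          (by linarith : (0:ℝ) ≤ ((n : ℝ) - 2) / 2)) hApos.le) hcr.le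
      exact mul_nonneg h1 (by linarith)
    have hdiff : -(p * ((c * (p - 1) * A) * c + (A * s) * (-L * s)))
        - ((n : ℝ) - 1) / tanl ℓ r * (p * (A * s) * c)
        - ((((n : ℝ) - 2) / 2) ^ 2 * A * c ^ 2 - ((n : ℝ) - 2) / 2 * L * (A * s * s))
        = ((n : ℝ) - 1) * (((n : ℝ) - 2) / 2) * A * c * (s * (1 / tanl ℓ r) - c) := by
      rw [hp]
      field_simp
      ring
    linarith [hdiff ▸ hfact]
  constructor
  · calc -(deriv (deriv Φ) r) - ((n : ℝ) - 1) / tanl ℓ r * deriv Φ r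
        ≥ (((n : ℝ) - 2) / 2) ^ 2 * A * c ^ 2 - ((n : ℝ) - 2) / 2 * L * (A * s * s) :=
          main1
      _ = (((n : ℝ) - 2) / 2) ^ 2 * s ^ (-1 - (n : ℝ) / 2) * c ^ 2
          - ((n : ℝ) - 2) / 2 * L * s ^ (1 - (n : ℝ) / 2) := by
          rw [e3, ← hp, e2]
  · have hΦr : Φ r = A * s * s := by rw [hΦ r]; exact e2
    have hΦpos : 0 < Φ r := by rw [hΦr]; positivity
    rw [ge_iff_le, le_div_iff₀ hΦpos, hΦr]
    have htl2 : 1 / tanl L r ^ 2 = c ^ 2 / s ^ 2 := by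
      rw [htanL]
      rw [div_pow, one_div_div]
    rw [htl2]
    have heq : ((((n : ℝ) - 2) / 2) ^ 2 * (c ^ 2 / s ^ 2) - ((n : ℝ) - 2) / 2 * L)
        * (A * s * s)
        = (((n : ℝ) - 2) / 2) ^ 2 * A * c ^ 2 - ((n : ℝ) - 2) / 2 * L * (A * s * s) := by
      field_simp
    rw [heq]
    have : -(deriv (deriv Φ) r + ((n : ℝ) - 1) / tanl ℓ r * deriv Φ r)
        = -(deriv (deriv Φ) r) - ((n : ℝ) - 1) / tanl ℓ r * deriv Φ r := by ring
    rw [this]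
    exact main1
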